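/- Under the feasibility assumptions of QRAP-NC, for each $j$ and $C \in [L_j, U_j]$, the optimal solution of QRAP$^j(C)$ — the problem obtained from QRAP-NC$^j(C)$ by replacing the nested constraints $L_k \le \sum_{i \le k} x_i \le U_k$ ($k < j$) with single-variable bounds $x^{j-1}_i(L_{j-1}) \le x_i \le x^{j-1}_i(U_{j-1})$ for $i < j$ — coincides with the optimal solution of QRAP-NC$^j(C)$. -/

import Mathlib

def qrapncFeas (n : ℕ) (l u L U : Fin n → ℝ) (C : ℝ) (x : Fin n → ℝ) : Prop :=
  (∑ i, x i = C) ∧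
  (∀ k : Fin n, (k : ℕ) + 1 < n →
    L k ≤ ∑ i ∈ Finset.Iic k, x i ∧ ∑ i ∈ Finset.Iic k, x i ≤ U k) ∧
  (∀ i, l i ≤ x i ∧ x i ≤ u i)

noncomputable def qrapObj (n : ℕ) (a x : Fin n → ℝ) : ℝ := ∑ i, (1/2) * (x i)^2 / a i

def qrapncOpt (n : ℕ) (a l u L U : Fin n → ℝ) (C : ℝ) (x : Fin n → ℝ) : Prop :=
  qrapncFeas n l u L U C x ∧
  ∀ y, qrapncFeas n l u L U C y → qrapObj n a x ≤ qrapObj n a y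

/-!
Optimal solutions of QRAP-NC are monotone in the budget `C`. The prefix of an optimum is optimal
for the prefix problem with its own budget, so by induction it suffices to compare last
coordinates and prefix budgets of two optima `x`, `y` with budgets `B₁ ≤ B₂`. If `y` had the
smaller last coordinate but the larger prefix budget, mixing the prefixes with weights `s, t` and
the last coordinates with the swapped weights `t, s` yields two feasible points with the same
budgets and strictly smaller total cost. Monotonicity puts every optimum of QRAP-NC^j(C) between
`x^{j-1}(L_{j-1})` and `x^{j-1}(U_{j-1})`; conversely, between these two points every prefix sum
lies in `[L_k, U_k]`. Hence QRAP^j(C) has a smaller feasible set that contains all optima of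
QRAP-NC^j(C), and an optimum exists by compactness.
-/

open Finset

theorem sum_Iic_castSucc {M : Type*} [AddCommMonoid M] {n : ℕ} (f : Fin (n + 1) → M)
    (k : Fin n) :
    ∑ i ∈ Iic k.castSucc, f i = ∑ i ∈ Iic k, f i.castSucc := by
  rw [← Fin.map_castSuccEmb_Iic, sum_map]
  rfl

theorem minimizer_iff_of_imp {α β : Type*} [Preorder β] {f : α → β} {F R : α → Prop}
    (hRF : ∀ x, R x → F x) (hFR : ∀ x, F x → (∀ y, F y → f x ≤ f y) → R x)
    (hex : ∀ x, F x → ∃ x₀, F x₀ ∧ ∀ y, F y → f x₀ ≤ f y) (x : α) :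
    (F x ∧ ∀ y, F y → f x ≤ f y) ↔ (R x ∧ ∀ y, R y → f x ≤ f y) := by
  constructor
  · rintro ⟨hx, hmin⟩
    exact ⟨hFR x hx hmin, fun y hy => hmin y (hRF y hy)⟩
  · rintro ⟨hx, hmin⟩
    obtain ⟨x₀, hx₀, hmin₀⟩ := hex x (hRF x hx)
    exact ⟨hRF x hx, fun y hy => (hmin x₀ (hFR x₀ hx₀ hmin₀)).trans (hmin₀ y hy)⟩

theorem sq_add_sq_of_add_eq_one {s t : ℝ} (hst : s + t = 1) (x y : ℝ) :
    (s * x + t * y) ^ 2 + (t * x + s * y) ^ 2 = x ^ 2 + y ^ 2 - 2 * s * t * (x - y) ^ 2 := by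
  obtain rfl : t = 1 - s := by linarith
  ring

theorem exists_add_eq_one_mul_eq_mul {g G : ℝ} (hg : 0 < g) (hG : 0 < G) :
    ∃ s t : ℝ, 0 < s ∧ 0 < t ∧ s + t = 1 ∧ s * g = t * G :=
  ⟨G / (g + G), g / (g + G), by positivity, by positivity, by field_simp; ring, by
    field_simp⟩

theorem exists_qrapncOpt {n : ℕ} (a : Fin n → ℝ) {l u L U : Fin n → ℝ} {C : ℝ}
    (h : ∃ x, qrapncFeas n l u L U C x) : ∃ x, qrapncOpt n a l u L U C x := by
  have hclosed : IsClosed {x | qrapncFeas n l u L U C x} := by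
    simp only [qrapncFeas, Set.ofPred_and, Set.ofPred_forall]
    refine .inter (isClosed_eq (by fun_prop) continuous_const) (.inter ?_ ?_) <;>
      refine isClosed_iInter fun k => ?_
    · exact isClosed_iInter fun _ => .inter (isClosed_le (by fun_prop) (by fun_prop))
        (isClosed_le (by fun_prop) (by fun_prop))
    · exact .inter (isClosed_le (by fun_prop) (by fun_prop))
        (isClosed_le (by fun_prop) (by fun_prop))
  have hbox : {x | qrapncFeas n l u L U C x} ⊆ Set.univ.pi fun i => Set.Icc (l i) (u i) :=
    fun x hx i _ => hx.2.2 i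
  have hcont : Continuous (qrapObj n a) := by unfold qrapObj; fun_prop
  obtain ⟨x, hx, hmin⟩ := ((isCompact_univ_pi fun i => isCompact_Icc).of_isClosed_subset hclosed
    hbox).exists_isMinOn h hcont.continuousOn
  exact ⟨x, hx, fun y hy => hmin hy⟩

theorem qrapncFeas_smul_add_smul {n : ℕ} {l u L U : Fin n → ℝ} {C₁ C₂ s t : ℝ}
    {x y : Fin n → ℝ} (hx : qrapncFeas n l u L U C₁ x) (hy : qrapncFeas n l u L U C₂ y)
    (hs : 0 ≤ s) (ht : 0 ≤ t) (hst : s + t = 1) :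
    qrapncFeas n l u L U (s * C₁ + t * C₂) (s • x + t • y) := by
  have hsum : ∀ S : Finset (Fin n), ∑ i ∈ S, (s • x + t • y) i =
      s * ∑ i ∈ S, x i + t * ∑ i ∈ S, y i := by
    simp [sum_add_distrib, mul_sum]
  refine ⟨by rw [hsum, hx.1, hy.1], fun k hk => ?_, fun i => ?_⟩
  · rw [hsum]
    exact convex_Icc (L k) (U k) (hx.2.1 k hk) (hy.2.1 k hk) hs ht hst
  · exact convex_Icc (l i) (u i) (hx.2.2 i) (hy.2.2 i) hs ht hst

theorem qrapncFeas_of_le_of_le {n : ℕ} {l u L U : Fin n → ℝ} {C₁ C₂ C : ℝ}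
    {x₁ x₂ y : Fin n → ℝ} (h₁ : qrapncFeas n l u L U C₁ x₁)
    (h₂ : qrapncFeas n l u L U C₂ x₂)
    (h₁y : x₁ ≤ y) (hy₂ : y ≤ x₂) (hy : ∑ i, y i = C) : qrapncFeas n l u L U C y :=
  ⟨hy, fun k hk => ⟨(h₁.2.1 k hk).1.trans (sum_le_sum fun i _ => h₁y i),
    (sum_le_sum fun i _ => hy₂ i).trans (h₂.2.1 k hk).2⟩,
    fun i => ⟨(h₁.2.2 i).1.trans (h₁y i), (hy₂ i).trans (h₂.2.2 i).2⟩⟩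

theorem qrapObj_smul_add_smul_add_le {n : ℕ} {a : Fin n → ℝ} (ha : ∀ i, 0 ≤ a i)
    (x y : Fin n → ℝ) {s t : ℝ} (hs : 0 ≤ s) (ht : 0 ≤ t) (hst : s + t = 1) :
    qrapObj n a (s • x + t • y) + qrapObj n a (t • x + s • y) ≤
      qrapObj n a x + qrapObj n a y := by
  simp only [qrapObj, ← sum_add_distrib]
  refine sum_le_sum fun i _ => ?_
  simp only [Pi.add_apply, Pi.smul_apply, smul_eq_mul, ← add_div, ← mul_add,
    sq_add_sq_of_add_eq_one hst]
  refine div_le_div_of_nonneg_right ?_ (ha i)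
  nlinarith [mul_nonneg (mul_nonneg hs ht) (sq_nonneg (x i - y i))]

theorem qrapObj_snoc {n : ℕ} (a : Fin (n + 1) → ℝ) (p : Fin n → ℝ) (t : ℝ) :
    qrapObj (n + 1) a (Fin.snoc p t) =
      qrapObj n (a ∘ Fin.castSucc) p + 1 / 2 * t ^ 2 / a (Fin.last n) := by
  simp [qrapObj, Fin.sum_univ_castSucc]

theorem qrapncFeas_snoc_iff {n : ℕ} {l u L U : Fin (n + 2) → ℝ} {C t : ℝ}
    {p : Fin (n + 1) → ℝ} :
    qrapncFeas (n + 2) l u L U C (Fin.snoc p t) ↔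
      qrapncFeas (n + 1) (l ∘ Fin.castSucc) (u ∘ Fin.castSucc) (L ∘ Fin.castSucc)
        (U ∘ Fin.castSucc) (C - t) p ∧
      (L (Fin.last n).castSucc ≤ C - t ∧ C - t ≤ U (Fin.last n).castSucc) ∧
      (l (Fin.last (n + 1)) ≤ t ∧ t ≤ u (Fin.last (n + 1))) := by
  have hIic : Iic (Fin.last n) = univ := by ext; simp [Fin.le_last]
  simp [qrapncFeas, Fin.forall_fin_succ' (n := n + 1), Fin.forall_fin_succ' (n := n),
    sum_Iic_castSucc, hIic, Fin.sum_univ_castSucc, eq_sub_iff_add_eq]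
  grind

theorem qrapncFeas_snoc_smul_add_smul {n : ℕ} {l u L U : Fin (n + 2) → ℝ}
    {B₁ B₂ s t xₙ yₙ : ℝ} {p q : Fin (n + 1) → ℝ}
    (hx : qrapncFeas (n + 2) l u L U B₁ (Fin.snoc p xₙ))
    (hy : qrapncFeas (n + 2) l u L U B₂ (Fin.snoc q yₙ))
    (hs : 0 ≤ s) (ht : 0 ≤ t) (hst : s + t = 1)
    (hB : s * (B₁ - xₙ) + t * (B₂ - yₙ) = B₁ - (t * xₙ + s * yₙ)) :
    qrapncFeas (n + 2) l u L U B₁ (Fin.snoc (s • p + t • q) (t * xₙ + s * yₙ)) := by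
  rw [qrapncFeas_snoc_iff] at hx hy ⊢
  rw [← hB]
  exact ⟨qrapncFeas_smul_add_smul hx.1 hy.1 hs ht hst, convex_Icc _ _ hx.2.1 hy.2.1 hs ht hst,
    convex_Icc _ _ hx.2.2 hy.2.2 ht hs (by linarith)⟩

theorem qrapncOpt.init {n : ℕ} {a l u L U : Fin (n + 2) → ℝ} {C t : ℝ}
    {p : Fin (n + 1) → ℝ}
    (h : qrapncOpt (n + 2) a l u L U C (Fin.snoc p t)) :
    qrapncOpt (n + 1) (a ∘ Fin.castSucc) (l ∘ Fin.castSucc) (u ∘ Fin.castSucc)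
      (L ∘ Fin.castSucc) (U ∘ Fin.castSucc) (C - t) p := by
  have hF := qrapncFeas_snoc_iff.mp h.1
  refine ⟨hF.1, fun q hq => ?_⟩
  have := h.2 (Fin.snoc q t) (qrapncFeas_snoc_iff.mpr ⟨hq, hF.2⟩)
  rw [qrapObj_snoc, qrapObj_snoc] at this
  linarith

theorem qrapncOpt.sub_last_le_of_last_lt {n : ℕ} {a l u L U : Fin (n + 2) → ℝ}
    (ha : ∀ i, 0 < a i) {B₁ B₂ : ℝ} {x y : Fin (n + 2) → ℝ}
    (hx : qrapncOpt (n + 2) a l u L U B₁ x) (hy : qrapncOpt (n + 2) a l u L U B₂ y)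
    (hlt : y (Fin.last _) < x (Fin.last _)) :
    B₂ - y (Fin.last _) ≤ B₁ - x (Fin.last _) := by
  cases x using Fin.snocCases with | snoc p xₙ
  cases y using Fin.snocCases with | snoc q yₙ
  simp only [Fin.snoc_last] at hlt ⊢
  by_contra! hgap
  -- the balance `s (xₙ - yₙ) = t (prefix gap)` is what keeps both budgets unchanged
  obtain ⟨s, t, hs, ht, hst, hbal⟩ :=
    exists_add_eq_one_mul_eq_mul (sub_pos.2 hlt) (sub_pos.2 hgap)
  have hB : s * (B₁ - xₙ) + t * (B₂ - yₙ) = B₁ - (t * xₙ + s * yₙ) := by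
    linear_combination B₁ * hst - hbal
  have hx' := hx.2 _ (qrapncFeas_snoc_smul_add_smul hx.1 hy.1 hs.le ht.le hst hB)
  have hy' := hy.2 _ (qrapncFeas_snoc_smul_add_smul hy.1 hx.1 hs.le ht.le hst
    (by linear_combination (B₁ + B₂) * hst - hB))
  have hprefix := qrapObj_smul_add_smul_add_le (a := a ∘ Fin.castSucc) (fun i => (ha _).le)
    p q hs.le ht.le hst
  have hlast :
      (1 / 2 * (t * xₙ + s * yₙ) ^ 2 + 1 / 2 * (t * yₙ + s * xₙ) ^ 2) / a (Fin.last _) <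
      (1 / 2 * xₙ ^ 2 + 1 / 2 * yₙ ^ 2) / a (Fin.last _) := by
    refine div_lt_div_of_pos_right ?_ (ha _)
    nlinarith [sq_add_sq_of_add_eq_one (add_comm s t ▸ hst) xₙ yₙ,
      mul_pos (mul_pos hs ht) (pow_pos (sub_pos.2 hlt) 2)]
  simp only [qrapObj_snoc] at hx' hy'
  rw [add_comm (s • q)] at hy'
  rw [add_div, add_div] at hlast
  linarith

theorem qrapncOpt_mono {n : ℕ} {a l u L U : Fin (n + 1) → ℝ} (ha : ∀ i, 0 < a i)
    {B₁ B₂ : ℝ} {x y : Fin (n + 1) → ℝ} (hB : B₁ ≤ B₂)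
    (hx : qrapncOpt (n + 1) a l u L U B₁ x) (hy : qrapncOpt (n + 1) a l u L U B₂ y) :
    x ≤ y := by
  induction n generalizing B₁ B₂ with
  | zero =>
    intro i
    fin_cases i
    have hx₀ : x 0 = B₁ := by simpa using hx.1.1
    have hy₀ : y 0 = B₂ := by simpa using hy.1.1
    simpa [hx₀, hy₀] using hB
  | succ n ih =>
    have hlast : x (Fin.last _) ≤ y (Fin.last _) := by
      by_contra! h
      linarith [hx.sub_last_le_of_last_lt ha hy h]
    have hinit : B₁ - x (Fin.last _) ≤ B₂ - y (Fin.last _) := by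
      by_contra! h
      linarith [hy.sub_last_le_of_last_lt ha hx (by linarith)]
    cases x using Fin.snocCases with | snoc p xₙ
    cases y using Fin.snocCases with | snoc q yₙ
    simp only [Fin.snoc_last] at hlast hinit
    have hpq := ih (fun i => ha _) hinit hx.init hy.init
    intro i
    induction i using Fin.lastCases with
    | last => simpa using hlast
    | cast i => simpa using hpq i

theorem qrapncFeas_of_bounds {n : ℕ} {l u L U : Fin (n + 2) → ℝ} {C : ℝ}
    {xL xU : Fin (n + 1) → ℝ} {x : Fin (n + 2) → ℝ}
    (hxL : qrapncFeas (n + 1) (l ∘ Fin.castSucc) (u ∘ Fin.castSucc) (L ∘ Fin.castSucc)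
      (U ∘ Fin.castSucc) (L (Fin.last n).castSucc) xL)
    (hxU : qrapncFeas (n + 1) (l ∘ Fin.castSucc) (u ∘ Fin.castSucc) (L ∘ Fin.castSucc)
      (U ∘ Fin.castSucc) (U (Fin.last n).castSucc) xU)
    (hsum : ∑ i, x i = C) (hbounds : ∀ i, xL i ≤ x i.castSucc ∧ x i.castSucc ≤ xU i)
    (hlast : l (Fin.last _) ≤ x (Fin.last _) ∧ x (Fin.last _) ≤ u (Fin.last _)) :
    qrapncFeas (n + 2) l u L U C x := by
  cases x using Fin.snocCases with | snoc p t
  simp only [Fin.snoc_castSucc, Fin.snoc_last] at hbounds hlast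
  have hp : ∑ i, p i = C - t := by
    simpa [Fin.sum_univ_castSucc, eq_sub_iff_add_eq] using hsum
  refine qrapncFeas_snoc_iff.mpr ⟨qrapncFeas_of_le_of_le hxL hxU (fun i => (hbounds i).1)
    (fun i => (hbounds i).2) hp, ⟨?_, ?_⟩, hlast⟩
  · rw [← hp, ← hxL.1]
    exact sum_le_sum fun i _ => (hbounds i).1
  · rw [← hp, ← hxU.1]
    exact sum_le_sum fun i _ => (hbounds i).2

theorem qrapncOpt.castSucc_bounds {n : ℕ} {a l u L U : Fin (n + 2) → ℝ} (ha : ∀ i, 0 < a i)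
    {C : ℝ}
    {xL xU : Fin (n + 1) → ℝ} {x : Fin (n + 2) → ℝ}
    (hxL : qrapncOpt (n + 1) (a ∘ Fin.castSucc) (l ∘ Fin.castSucc) (u ∘ Fin.castSucc)
      (L ∘ Fin.castSucc) (U ∘ Fin.castSucc) (L (Fin.last n).castSucc) xL)
    (hxU : qrapncOpt (n + 1) (a ∘ Fin.castSucc) (l ∘ Fin.castSucc) (u ∘ Fin.castSucc)
      (L ∘ Fin.castSucc) (U ∘ Fin.castSucc) (U (Fin.last n).castSucc) xU)
    (hx : qrapncOpt (n + 2) a l u L U C x) (i : Fin (n + 1)) :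
    xL i ≤ x i.castSucc ∧ x i.castSucc ≤ xU i := by
  cases x using Fin.snocCases with | snoc p t
  obtain ⟨-, hLU, -⟩ := qrapncFeas_snoc_iff.mp hx.1
  simp only [Fin.snoc_castSucc]
  exact ⟨qrapncOpt_mono (fun _ => ha _) hLU.1 hxL hx.init i,
    qrapncOpt_mono (fun _ => ha _) hLU.2 hx.init hxU i⟩

theorem stmt_7 (m : ℕ) (hm : 1 ≤ m) (a l u L U : Fin (m+1) → ℝ) (C : ℝ)
    (ha : ∀ i, 0 < a i)
    (xL xU : Fin m → ℝ)
    (hxL : qrapncOpt m (a ∘ Fin.castSucc) (l ∘ Fin.castSucc) (u ∘ Fin.castSucc)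
      (L ∘ Fin.castSucc) (U ∘ Fin.castSucc) (L ⟨m - 1, by omega⟩) xL)
    (hxU : qrapncOpt m (a ∘ Fin.castSucc) (l ∘ Fin.castSucc) (u ∘ Fin.castSucc)
      (L ∘ Fin.castSucc) (U ∘ Fin.castSucc) (U ⟨m - 1, by omega⟩) xU) :
    ∀ x : Fin (m+1) → ℝ,
      qrapncOpt (m+1) a l u L U C x ↔
      ((∑ i, x i = C ∧
          (∀ i : Fin m, xL i ≤ x i.castSucc ∧ x i.castSucc ≤ xU i) ∧
          l (Fin.last m) ≤ x (Fin.last m) ∧ x (Fin.last m) ≤ u (Fin.last m)) ∧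
        ∀ y : Fin (m+1) → ℝ,
          (∑ i, y i = C ∧
            (∀ i : Fin m, xL i ≤ y i.castSucc ∧ y i.castSucc ≤ xU i) ∧
            l (Fin.last m) ≤ y (Fin.last m) ∧ y (Fin.last m) ≤ u (Fin.last m)) →
          qrapObj (m+1) a x ≤ qrapObj (m+1) a y) := by
  obtain ⟨n, rfl⟩ : ∃ n, m = n + 1 := ⟨m - 1, by omega⟩
  have hidx : (⟨n + 1 - 1, by omega⟩ : Fin (n + 2)) = (Fin.last n).castSucc := Fin.ext (by simp)
  rw [hidx] at hxL hxU
  unfold qrapncOpt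
  exact minimizer_iff_of_imp (fun x hx => qrapncFeas_of_bounds hxL.1 hxU.1 hx.1 hx.2.1 hx.2.2)
    (fun x hx hmin => ⟨hx.1, qrapncOpt.castSucc_bounds ha hxL hxU ⟨hx, hmin⟩, hx.2.2 _⟩)
    (fun x hx => exists_qrapncOpt a ⟨x, hx⟩)
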